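/- arXiv:2008.02845 — 2 statements merged into one kernel-verified Lean document; each statement's English description precedes it below -/
import Mathlib

section
/- Let R be a commutative ring and let C be a radical divisible conservative system of R. Assume that for every prime ideal P of R belonging to C there exist a finite subset Σ ⊆ P and an element s ∈ R \ P such that P = (Σ)_C : s. Then C is noetherian, i.e. every ascending chain of C-ideals stabilizes. -/
/-- The division ideal `I : s = {r ∈ R | r * s ∈ I}`. -/
def idealDiv {R : Type*} [CommRing R] (I : Ideal R) (s : R) : Ideal R where
  carrier := {r : R | r * s ∈ I}
  zero_mem' := by simp
  add_mem' := by
    intro a b ha hb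
    simpa [add_mul] using I.add_mem ha hb
  smul_mem' := by
    intro c a ha
    simp only [Set.mem_setOf_eq, smul_eq_mul] at *
    rw [mul_assoc]
    exact I.mul_mem_left c ha

/-- A conservative system of ideals of a commutative ring: a collection of ideals closed
under intersections of arbitrary subfamilies (the empty intersection being `⊤ = R`) and
under unions (suprema) of nonempty chains. -/
structure ConservativeSystem (R : Type*) [CommRing R] where
  carrier : Set (Ideal R)
  sInf_mem : ∀ S : Set (Ideal R), S ⊆ carrier → sInf S ∈ carrier
  chain_sSup_mem : ∀ S : Set (Ideal R), S ⊆ carrier → S.Nonempty →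
    IsChain (· ≤ ·) S → sSup S ∈ carrier

variable {R : Type*} [CommRing R]

/-- The `C`-ideal `C`-generated by a subset `A ⊆ R`: the intersection of all `C`-ideals
containing `A`. -/
def ConservativeSystem.gen (C : ConservativeSystem R) (A : Set R) : Ideal R :=
  sInf {I : Ideal R | I ∈ C.carrier ∧ A ⊆ (I : Set R)}

/-- A conservative system is radical if all of its members are radical ideals. -/
def ConservativeSystem.IsRadicalSystem (C : ConservativeSystem R) : Prop :=
  ∀ I ∈ C.carrier, I.IsRadical

/-- A conservative system is divisible if it is closed under division of ideals by elements. -/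
def ConservativeSystem.IsDivisible (C : ConservativeSystem R) : Prop :=
  ∀ I ∈ C.carrier, ∀ s : R, idealDiv I s ∈ C.carrier

/-- A conservative system is noetherian if every ascending chain of `C`-ideals stabilizes. -/
def ConservativeSystem.IsNoetherianSystem (C : ConservativeSystem R) : Prop :=
  ∀ f : ℕ → Ideal R, (∀ n, f n ∈ C.carrier) → Monotone f → ∃ N, ∀ n, N ≤ n → f n = f N

/-- A `C`-ideal is finitely `C`-generated if it is `C`-generated by a finite set. -/
def ConservativeSystem.FinitelyGen (C : ConservativeSystem R) (I : Ideal R) : Prop :=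
  ∃ Fs : Finset R, I = C.gen (↑Fs : Set R)

/-!
A chain-closed system of ideals has finite character: `(A)_C` is the directed union of the
`(F)_C` with `F ⊆ A` finite. For infinite `A` this goes by induction on `#A`, writing `A` as the
union of the chain of its initial segments for a well-order of initial order type; each segment
is smaller than `A`. Consequently a chain whose union is finitely `C`-generated stabilizes, so
it suffices that every `C`-ideal is finitely `C`-generated, and otherwise Zorn's lemma gives a
maximal non-finitely `C`-generated `C`-ideal `M`.

Divisibility passes products to closures: if `AB ⊆ I ∈ C` then `(A)_C (B)_C ⊆ I`. So if
`ab ∈ M` with `a, b ∉ M`, the products of finite generators of `(M, a)_C` and `(M, b)_C`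
`C`-generate a radical ideal `J ⊆ M` with `m² ∈ J` for all `m ∈ M`, so `M = J` would be finitely
`C`-generated; thus `M` is prime.
Hence `M = (Σ)_C : s` with `s ∉ M`, and by maximality `(M, s)_C = (F, s)_C` for a finite
`F ⊆ M`. Then `M = (Σ ∪ F)_C`: for `x ∈ M`, `x ∈ (Σ ∪ F, s)_C` and `xs ∈ (Σ)_C` force
`x² ∈ (Σ ∪ F)_C`.
-/

theorem Set.Finite.exists_subset_Iio {β : Type*} [Preorder β] [IsDirectedOrder β] [Nonempty β]
    [NoMaxOrder β] {s : Set β} (hs : s.Finite) : ∃ x, s ⊆ Set.Iio x := by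
  obtain ⟨b, hb⟩ := hs.bddAbove
  obtain ⟨x, hx⟩ := exists_gt b
  exact ⟨x, fun _ hi => (hb hi).trans_lt hx⟩

open Cardinal in
theorem sSup_image_finset_subset_mem {α ι : Type*} [CompleteLattice α] {S : Set α}
    (hS : ∀ c ⊆ S, c.Nonempty → IsChain (· ≤ ·) c → sSup c ∈ S)
    {g : Finset ι → α} (hg : Monotone g) (hgS : ∀ F, g F ∈ S) (A : Set ι) :
    sSup (g '' {F | ↑F ⊆ A}) ∈ S := by
  induction A using (InvImage.wf (fun A : Set ι => #A) wellFounded_lt).induction with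
  | _ A ih =>
  by_cases hfin : A.Finite
  · have hgreatest : IsGreatest (g '' {F | ↑F ⊆ A}) (g hfin.toFinset) :=
      ⟨⟨_, by simp, rfl⟩, by
        rintro _ ⟨F, hF, rfl⟩
        exact hg (by simpa [← Finset.coe_subset] using hF)⟩
    exact hgreatest.csSup_eq ▸ hgS _
  have hinf : ℵ₀ ≤ #A := Cardinal.infinite_iff.1 (Set.infinite_coe_iff.2 hfin)
  obtain ⟨e⟩ : Nonempty ((#A).ord.ToType ≃ A) := by rw [← Cardinal.eq, Cardinal.mk_ord_toType]
  have : Nonempty (#A).ord.ToType :=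
    Ordinal.nonempty_toType_iff.2 (Cardinal.isSuccLimit_ord hinf).ne_bot
  have : NoMaxOrder (#A).ord.ToType := Cardinal.noMaxOrder hinf
  let segment (x : (#A).ord.ToType) : Set ι := (fun i => (e i : ι)) '' Set.Iio x
  let U (B : Set ι) : α := sSup (g '' {F | ↑F ⊆ B})
  have hU_mono {B B' : Set ι} (h : B ⊆ B') : U B ≤ U B' :=
    sSup_le_sSup (Set.image_mono fun _ hF => Set.Subset.trans hF h)
  have hsegment_sub (x) : segment x ⊆ A := by
    rintro _ ⟨i, -, rfl⟩
    exact (e i).2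
  have hsegment_exists (F : Finset ι) (hF : ↑F ⊆ A) : ∃ x, ↑F ⊆ segment x := by
    obtain ⟨x, hx⟩ := (F.finite_toSet.preimage
      (Subtype.val_injective.comp e.injective).injOn).exists_subset_Iio
    exact ⟨x, fun f hf => ⟨e.symm ⟨f, hF hf⟩, hx (by simpa using hf), by simp⟩⟩
  have hU_eq : U A = ⨆ x, U (segment x) := by
    refine le_antisymm (sSup_le ?_) (iSup_le fun x => hU_mono (hsegment_sub x))
    rintro _ ⟨F, hF, rfl⟩
    obtain ⟨x, hx⟩ := hsegment_exists F hF
    exact le_iSup_of_le x (le_sSup ⟨F, hx, rfl⟩)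
  have hU_mem (x) : U (segment x) ∈ S :=
    ih _ (Cardinal.mk_image_le.trans_lt (by simpa using Cardinal.mk_Iio_lt x (by simp)))
  change U A ∈ S
  rw [hU_eq]
  exact hS _ (Set.range_subset_iff.2 hU_mem) (Set.range_nonempty _)
    (Monotone.isChain_range fun x y hxy =>
      hU_mono (Set.image_mono (Set.Iio_subset_Iio hxy)))

namespace ConservativeSystem

variable (C : ConservativeSystem R)

lemma gen_mem (A : Set R) : C.gen A ∈ C.carrier :=
  C.sInf_mem _ fun _ hI => hI.1

lemma subset_gen (A : Set R) : A ⊆ C.gen A := fun _ hx =>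
  Submodule.mem_sInf.2 fun _ hI => hI.2 hx

lemma gen_le {A : Set R} {I : Ideal R} (hI : I ∈ C.carrier) (h : A ⊆ I) : C.gen A ≤ I :=
  sInf_le ⟨hI, h⟩

lemma gen_mono {A B : Set R} (h : A ⊆ B) : C.gen A ≤ C.gen B :=
  C.gen_le (C.gen_mem B) (h.trans (C.subset_gen B))

lemma lt_gen_insert {I : Ideal R} {a : R} (ha : a ∉ I) : I < C.gen (insert a I) :=
  SetLike.lt_iff_le_and_exists.2
    ⟨fun _ hx => C.subset_gen _ (Or.inr hx), a, C.subset_gen _ (Or.inl rfl), ha⟩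

lemma gen_eq_sSup_image_finset (A : Set R) :
    C.gen A = sSup ((fun F : Finset R => C.gen F) '' {F | ↑F ⊆ A}) := by
  refine le_antisymm (C.gen_le ?_ fun a ha => ?_) (sSup_le ?_)
  · exact sSup_image_finset_subset_mem C.chain_sSup_mem
      (fun _ _ h => C.gen_mono (Finset.coe_subset.2 h)) (fun F => C.gen_mem F) A
  · have hmem : C.gen ↑({a} : Finset R) ∈ (fun F : Finset R => C.gen F) '' {F | ↑F ⊆ A} :=
      ⟨{a}, by simpa using ha, rfl⟩
    exact le_sSup hmem (C.subset_gen _ (by simp))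
  · rintro _ ⟨F, hF, rfl⟩
    exact C.gen_mono hF

lemma exists_le_of_gen_le_sSup {c : Set (Ideal R)} (hc : c ⊆ C.carrier) (hne : c.Nonempty)
    (hdir : DirectedOn (· ≤ ·) c) {F : Finset R} (h : C.gen F ≤ sSup c) :
    ∃ I ∈ c, C.gen F ≤ I := by
  have hspan : Ideal.span (F : Set R) ≤ sSup c := (Ideal.span_le.2 (C.subset_gen _)).trans h
  obtain ⟨I, hI, hle⟩ := (CompleteLattice.isCompactElement_iff_le_of_directed_sSup_le _ _).1
    (Submodule.finset_span_isCompactElement F) c hne hdir hspan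
  exact ⟨I, hI, C.gen_le (hc hI) (Ideal.span_le.1 hle)⟩

lemma FinitelyGen.exists_finset_subset {A : Set R} (h : C.FinitelyGen (C.gen A)) :
    ∃ F : Finset R, ↑F ⊆ A ∧ C.gen A = C.gen F := by
  classical
  obtain ⟨Φ, hΦ⟩ := h
  have hdir : DirectedOn (· ≤ ·) ((fun F : Finset R => C.gen F) '' {F | ↑F ⊆ A}) := by
    rintro _ ⟨F₁, hF₁, rfl⟩ _ ⟨F₂, hF₂, rfl⟩
    exact ⟨_, ⟨F₁ ∪ F₂, by simpa using Set.union_subset hF₁ hF₂, rfl⟩,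
      C.gen_mono (by simp), C.gen_mono (by simp)⟩
  obtain ⟨_, ⟨F, hF, rfl⟩, hle⟩ := C.exists_le_of_gen_le_sSup
    (by rintro _ ⟨F, -, rfl⟩; exact C.gen_mem _) (Set.image_nonempty.2 ⟨∅, by simp⟩) hdir
    (hΦ ▸ (C.gen_eq_sSup_image_finset A).le)
  exact ⟨F, hF, le_antisymm (hΦ ▸ hle) (C.gen_mono hF)⟩

lemma sSup_mem_of_finitelyGen {c : Set (Ideal R)} (hc : c ⊆ C.carrier) (hne : c.Nonempty)
    (hchain : IsChain (· ≤ ·) c) (h : C.FinitelyGen (sSup c)) : sSup c ∈ c := by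
  obtain ⟨F, hF⟩ := h
  obtain ⟨I, hI, hle⟩ := C.exists_le_of_gen_le_sSup hc hne hchain.directedOn hF.ge
  rwa [le_antisymm (hF ▸ hle) (le_sSup hI)]

lemma isNoetherianSystem_of_forall_finitelyGen (h : ∀ I ∈ C.carrier, C.FinitelyGen I) :
    C.IsNoetherianSystem := by
  intro f hf hmono
  have hrange : Set.range f ⊆ C.carrier := Set.range_subset_iff.2 hf
  obtain ⟨N, hN⟩ := C.sSup_mem_of_finitelyGen hrange (Set.range_nonempty f) hmono.isChain_range
    (h _ (C.chain_sSup_mem _ hrange (Set.range_nonempty f) hmono.isChain_range))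
  exact ⟨N, fun n hn => le_antisymm (hN ▸ le_sSup ⟨n, rfl⟩) (hmono hn)⟩

lemma exists_maximal_not_finitelyGen {I : Ideal R} (hI : I ∈ C.carrier)
    (hI_fg : ¬ C.FinitelyGen I) :
    ∃ M, Maximal (fun J => J ∈ C.carrier ∧ ¬ C.FinitelyGen J) M := by
  obtain ⟨M, -, hM⟩ := zorn_le_nonempty₀ {J | J ∈ C.carrier ∧ ¬ C.FinitelyGen J}
    (fun c hc hchain J hJ =>
      ⟨sSup c, ⟨C.chain_sSup_mem c (fun K hK => (hc hK).1) ⟨J, hJ⟩ hchain, fun hfg =>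
        (hc (C.sSup_mem_of_finitelyGen (fun K hK => (hc hK).1) ⟨J, hJ⟩ hchain hfg)).2 hfg⟩,
        fun _ => le_sSup⟩)
    I ⟨hI, hI_fg⟩
  exact ⟨M, hM⟩

lemma finitelyGen_gen_insert_of_maximal {M : Ideal R}
    (hM : Maximal (fun J => J ∈ C.carrier ∧ ¬ C.FinitelyGen J) M) {a : R} (ha : a ∉ M) :
    C.FinitelyGen (C.gen (insert a M)) := by
  by_contra h
  exact (C.lt_gen_insert ha).not_ge (hM.2 ⟨C.gen_mem _, h⟩ (C.lt_gen_insert ha).le)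

variable {C}

lemma mem_of_mul_self_mem (hrad : C.IsRadicalSystem) {I : Ideal R} (hI : I ∈ C.carrier)
    {x : R} (h : x * x ∈ I) : x ∈ I :=
  hrad I hI ⟨2, by rwa [pow_two]⟩

lemma gen_le_idealDiv (hdiv : C.IsDivisible) {I : Ideal R} (hI : I ∈ C.carrier) {A : Set R}
    {x : R} (h : ∀ a ∈ A, a * x ∈ I) : C.gen A ≤ idealDiv I x :=
  C.gen_le (hdiv I hI x) h

lemma mul_mem_of_mem_gen (hdiv : C.IsDivisible) {I : Ideal R} (hI : I ∈ C.carrier)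
    {A B : Set R} (hAB : ∀ a ∈ A, ∀ b ∈ B, a * b ∈ I) {x y : R} (hx : x ∈ C.gen A)
    (hy : y ∈ C.gen B) : x * y ∈ I :=
  gen_le_idealDiv hdiv hI (fun a ha => mul_comm y a ▸
    gen_le_idealDiv hdiv hI (fun b hb => mul_comm a b ▸ hAB a ha b hb) hy) hx

lemma mem_of_mem_gen_insert (hrad : C.IsRadicalSystem) (hdiv : C.IsDivisible) {I : Ideal R}
    (hI : I ∈ C.carrier) {s x : R} (hx : x ∈ C.gen (insert s I)) (hxs : x * s ∈ I) : x ∈ I :=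
  mem_of_mul_self_mem hrad hI <| gen_le_idealDiv hdiv hI (fun a ha => by
    rcases ha with rfl | ha
    · rwa [mul_comm]
    · exact I.mul_mem_right x ha) hx

lemma isPrime_of_maximal_not_finitelyGen (hrad : C.IsRadicalSystem) (hdiv : C.IsDivisible)
    {M : Ideal R} (hM : Maximal (fun J => J ∈ C.carrier ∧ ¬ C.FinitelyGen J) M) :
    M.IsPrime := by
  classical
  obtain ⟨hM_mem, hM_fg⟩ := hM.1
  refine ⟨fun htop => hM_fg ⟨{1}, ?_⟩, fun {a b} hab => ?_⟩
  · rw [htop, eq_comm, Ideal.eq_top_iff_one]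
    exact C.subset_gen _ (by simp)
  by_contra! hab_notMem
  obtain ⟨ha, hb⟩ := hab_notMem
  obtain ⟨Fa, hFa⟩ := C.finitelyGen_gen_insert_of_maximal hM ha
  obtain ⟨Fb, hFb⟩ := C.finitelyGen_gen_insert_of_maximal hM hb
  have hprod {x y : R} (hx : x ∈ C.gen (insert a M)) (hy : y ∈ C.gen (insert b M)) :
      x * y ∈ M := by
    refine mul_mem_of_mem_gen hdiv hM_mem ?_ hx hy
    rintro u (rfl | hu) v (rfl | hv)
    exacts [hab, M.mul_mem_left _ hv, M.mul_mem_right _ hu, M.mul_mem_right _ hu]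
  refine hM_fg ⟨Finset.image₂ (· * ·) Fa Fb, le_antisymm (fun m hm => ?_) (C.gen_le hM_mem ?_)⟩
  · refine mem_of_mul_self_mem hrad (C.gen_mem _) (mul_mem_of_mem_gen hdiv (C.gen_mem _)
      (fun u hu v hv => C.subset_gen _ ?_) (hFa ▸ C.subset_gen _ (Or.inr hm))
      (hFb ▸ C.subset_gen _ (Or.inr hm)))
    exact_mod_cast Finset.mem_image₂_of_mem hu hv
  · intro p hp
    obtain ⟨u, hu, v, hv, rfl⟩ := Finset.mem_image₂.1 (by exact_mod_cast hp)
    exact hprod (hFa ▸ C.subset_gen _ hu) (hFb ▸ C.subset_gen _ hv)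

lemma finitelyGen_of_eq_idealDiv (hrad : C.IsRadicalSystem) (hdiv : C.IsDivisible)
    {M : Ideal R} (hM : M ∈ C.carrier) {T : Finset R} (hT : ↑T ⊆ (M : Set R)) {s : R}
    (hM_eq : M = idealDiv (C.gen T) s) (hfg : C.FinitelyGen (C.gen (insert s M))) :
    C.FinitelyGen M := by
  classical
  obtain ⟨F, hF_sub, hF⟩ := hfg.exists_finset_subset
  have hF_erase : ↑(F.erase s) ⊆ (M : Set R) := fun f hf => by
    obtain ⟨hfs, hfF⟩ := Finset.mem_erase.1 hf
    exact (hF_sub hfF).resolve_left hfs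
  refine ⟨T ∪ F.erase s, le_antisymm (fun m hm => ?_) (C.gen_le hM ?_)⟩
  · refine mem_of_mem_gen_insert hrad hdiv (C.gen_mem _) (s := s) ?_ ?_
    · refine C.gen_mono (fun f hf => ?_) (hF ▸ C.subset_gen _ (Or.inr hm))
      by_cases hfs : f = s
      · exact Or.inl hfs
      · exact Or.inr (C.subset_gen _ (by simp [hfs, hf]))
    · exact C.gen_mono (by simp) (show m ∈ idealDiv (C.gen T) s from hM_eq ▸ hm)
  · simpa using Set.union_subset hT hF_erase

end ConservativeSystem

/-- Let `C` be a radical divisible conservative system of a commutative ring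
`R`. If every prime `C`-ideal `P` is of the form `(Σ)_C : s` for some finite `Σ ⊆ P` and some
`s ∈ R \ P`, then `C` is noetherian. -/
theorem isNoetherianSystem_of_prime_div (C : ConservativeSystem R)
    (hrad : C.IsRadicalSystem) (hdiv : C.IsDivisible)
    (hyp : ∀ P ∈ C.carrier, P.IsPrime →
      ∃ Fs : Finset R, (↑Fs : Set R) ⊆ (P : Set R) ∧
        ∃ s : R, s ∉ P ∧ P = idealDiv (C.gen (↑Fs : Set R)) s) :
    C.IsNoetherianSystem := by
  refine C.isNoetherianSystem_of_forall_finitelyGen fun I hI => ?_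
  by_contra hI_fg
  obtain ⟨M, hM⟩ := C.exists_maximal_not_finitelyGen hI hI_fg
  obtain ⟨T, hT, s, hs, hM_eq⟩ :=
    hyp M hM.1.1 (ConservativeSystem.isPrime_of_maximal_not_finitelyGen hrad hdiv hM)
  exact hM.1.2 (ConservativeSystem.finitelyGen_of_eq_idealDiv hrad hdiv hM.1.1 hT hM_eq
    (C.finitelyGen_gen_insert_of_maximal hM hs))
end

section
/- Let k be a field of characteristic zero, let A be a Poisson algebra over k, and let L be a field extension of k. Equip the L-algebra L ⊗_k A with the canonical Poisson bracket, i.e. an L-bilinear bracket that is antisymmetric, satisfies the Jacobi identity, is a derivation in each argument, and satisfies {a ⊗ b, c ⊗ d} = ac ⊗ {b, d} for all a, c ∈ L and b, d ∈ A. If the Poisson L-algebra L ⊗_k A satisfies the ACC on radical Poisson ideals, then A satisfies the ACC on radical Poisson ideals. -/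
/-- `B` is a Poisson bracket on the commutative `k`-algebra `A`: it is `k`-bilinear
(additivity and `k`-homogeneity in the first argument, together with antisymmetry, give
bilinearity), antisymmetric, satisfies the Jacobi identity, and is a derivation in each
argument. -/
def IsPoissonBracket (k : Type*) {A : Type*} [CommRing k] [CommRing A] [Algebra k A]
    (B : A → A → A) : Prop :=
  (∀ a b c : A, B (a + b) c = B a c + B b c) ∧
  (∀ (r : k) (a b : A), B (r • a) b = r • B a b) ∧
  (∀ a b : A, B a b = - B b a) ∧
  (∀ a b c : A, B a (B b c) + B b (B c a) + B c (B a b) = 0) ∧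
  (∀ a b c : A, B a (b * c) = B a b * c + b * B a c)

/-- An ideal `I` is a Poisson ideal for the bracket `B` if `{A, I} ⊆ I`. -/
def IsPoissonIdeal {A : Type*} [CommRing A] (B : A → A → A) (I : Ideal A) : Prop :=
  ∀ x : A, ∀ y ∈ I, B x y ∈ I

/-- `A` satisfies the ascending chain condition on radical Poisson ideals. -/
def PoissonRadicalACC {A : Type*} [CommRing A] (B : A → A → A) : Prop :=
  ∀ c : ℕ → Ideal A, (∀ n, IsPoissonIdeal B (c n)) → (∀ n, (c n).IsRadical) →
    Monotone c → ∃ N, ∀ n, N ≤ n → c n = c N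

open scoped TensorProduct

/-! Poisson ideals of `A` extend to Poisson ideals of `L ⊗[k] A` and are recovered from them
by contraction, because `L` is faithfully flat over `k`. In characteristic zero the radical of a
Poisson ideal is again Poisson, since every `{x, -}` is a derivation and radicals of
derivation-stable ideals are derivation-stable (Seidenberg). Hence `I ↦ √(I (L ⊗[k] A))` embeds
the ordered set of radical Poisson ideals of `A` into that of `L ⊗[k] A`. -/

namespace Derivation

variable {R A : Type*} [CommRing R] [CommRing A] [Algebra R A] (D : Derivation R A A)

lemma mul_map_pow (x : A) (n : ℕ) : x * D (x ^ n) = n • (x ^ n * D x) := by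
  cases n with
  | zero => simp
  | succ n => rw [leibniz_pow, smul_eq_mul, nsmul_eq_mul, nsmul_eq_mul, Nat.add_sub_cancel]; ring

lemma map_mem_span_of_map_mem_span {s : Set A} (hs : ∀ y ∈ s, D y ∈ Ideal.span s) :
    ∀ y ∈ Ideal.span s, D y ∈ Ideal.span s := by
  intro y hy
  induction hy using Submodule.span_induction with
  | mem y hy => exact hs y hy
  | zero => simp
  | add y z _ _ hy hz => rw [map_add]; exact add_mem hy hz
  | smul a y hy' hy =>
    rw [smul_eq_mul, leibniz]
    exact add_mem (Ideal.mul_mem_left _ a hy) (Ideal.mul_mem_right _ _ hy')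

lemma pow_mul_map_pow_mem (hu : ∀ n : ℕ, n ≠ 0 → IsUnit (n : A)) {I : Ideal A}
    (hI : ∀ y ∈ I, D y ∈ I) {a : A} {j m : ℕ} (ha : a ^ (m + j) ∈ I) :
    a ^ m * D a ^ (2 * j) ∈ I := by
  induction j generalizing m with
  | zero => simpa using ha
  | succ j ih =>
    set E := D a
    have hprev : a ^ (m + 1) * E ^ (2 * j) ∈ I := ih (by rwa [add_right_comm, add_assoc])
    -- Differentiate `hprev` and multiply by `E`: all but the wanted term are multiples of `hprev`.
    have hexpand : E * D (a ^ (m + 1) * E ^ (2 * j)) =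
        ((m + 1 : ℕ) : A) * (a ^ m * E ^ (2 * (j + 1))) +
          (2 * j : ℕ) * D E * (a ^ (m + 1) * E ^ (2 * j)) := by
      have hE := D.mul_map_pow E (2 * j)
      rw [leibniz, D.leibniz_pow (a := a) (m + 1)]
      simp only [smul_eq_mul, nsmul_eq_mul, Nat.add_sub_cancel] at hE ⊢
      push_cast at hE ⊢
      linear_combination a ^ (m + 1) * hE
    have hsum : ((m + 1 : ℕ) : A) * (a ^ m * E ^ (2 * (j + 1))) ∈ I := by
      have := I.mul_mem_left E (hI _ hprev)
      rw [hexpand] at this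
      simpa using I.sub_mem this (I.mul_mem_left ((2 * j : ℕ) * D E) hprev)
    exact (Ideal.unit_mul_mem_iff_mem I (hu _ m.succ_ne_zero)).mp hsum

lemma map_mem_radical (hu : ∀ n : ℕ, n ≠ 0 → IsUnit (n : A)) {I : Ideal A}
    (hI : ∀ y ∈ I, D y ∈ I) {a : A} (ha : a ∈ I.radical) : D a ∈ I.radical := by
  obtain ⟨n, hn⟩ := ha
  exact ⟨2 * n, by simpa using D.pow_mul_map_pow_mem hu hI (m := 0) (by simpa using hn)⟩

end Derivation

namespace IsPoissonBracket

variable {k A : Type*} [CommRing k] [CommRing A] [Algebra k A] {B : A → A → A}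

lemma map_add_right (hB : IsPoissonBracket k B) (a b c : A) : B a (b + c) = B a b + B a c := by
  rw [hB.2.2.1, hB.1, neg_add, ← hB.2.2.1 a b, ← hB.2.2.1 a c]

lemma map_smul_right (hB : IsPoissonBracket k B) (r : k) (a b : A) : B a (r • b) = r • B a b := by
  rw [hB.2.2.1, hB.2.1, ← smul_neg, ← hB.2.2.1]

lemma map_zero_left (hB : IsPoissonBracket k B) (a : A) : B 0 a = 0 := by
  simpa using hB.1 0 0 a

def derivation (hB : IsPoissonBracket k B) (x : A) : Derivation k A A :=
  Derivation.mk' ⟨⟨B x, hB.map_add_right x⟩, fun r y => hB.map_smul_right r x y⟩ fun a b => by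
    simp only [LinearMap.coe_mk, AddHom.coe_mk, hB.2.2.2.2, smul_eq_mul]
    ring

@[simp]
lemma derivation_apply (hB : IsPoissonBracket k B) (x y : A) : hB.derivation x y = B x y := rfl

lemma isPoissonIdeal_radical (hB : IsPoissonBracket k B)
    (hu : ∀ n : ℕ, n ≠ 0 → IsUnit (n : A)) {I : Ideal A} (hI : IsPoissonIdeal B I) :
    IsPoissonIdeal B I.radical := fun x _ hy =>
  (hB.derivation x).map_mem_radical hu (hI x) hy

end IsPoissonBracket

open Algebra.TensorProduct

section BaseChange

variable {R S A : Type*} [CommRing R] [CommRing S] [Algebra R S] [CommRing A] [Algebra R A]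

lemma Ideal.comap_includeRight_map_includeRight [Module.FaithfullyFlat R S] (I : Ideal A) :
    (I.map (includeRight : A →ₐ[R] S ⊗[R] A)).comap (includeRight : A →ₐ[R] S ⊗[R] A) = I := by
  let e : A ⊗[R] S ≃+* S ⊗[R] A := (Algebra.TensorProduct.comm R A S).toRingEquiv
  have h : (includeRight : A →ₐ[R] S ⊗[R] A).toRingHom =
      (e : A ⊗[R] S →+* S ⊗[R] A).comp (algebraMap A (A ⊗[R] S)) := by
    ext x; simp [e]
  change (I.map (includeRight : A →ₐ[R] S ⊗[R] A).toRingHom).comap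
    (includeRight : A →ₐ[R] S ⊗[R] A).toRingHom = I
  rw [h, ← Ideal.map_map, ← Ideal.comap_comap,
    Ideal.comap_map_of_bijective (e : A ⊗[R] S →+* S ⊗[R] A) e.bijective,
    Ideal.comap_map_eq_self_of_faithfullyFlat]

lemma Ideal.IsRadical.comap_radical_map_includeRight [Module.FaithfullyFlat R S] {I : Ideal A}
    (hI : I.IsRadical) :
    (I.map (includeRight : A →ₐ[R] S ⊗[R] A)).radical.comap
      (includeRight : A →ₐ[R] S ⊗[R] A) = I := by
  rw [Ideal.comap_radical, Ideal.comap_includeRight_map_includeRight, hI.radical]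

lemma IsPoissonIdeal.map_includeRight {B : A → A → A} {BS : S ⊗[R] A → S ⊗[R] A → S ⊗[R] A}
    (hBS : IsPoissonBracket S BS)
    (hcompat : ∀ (a c : S) (b d : A), BS (a ⊗ₜ[R] b) (c ⊗ₜ[R] d) = (a * c) ⊗ₜ[R] B b d)
    {I : Ideal A} (hI : IsPoissonIdeal B I) :
    IsPoissonIdeal BS (I.map (includeRight : A →ₐ[R] S ⊗[R] A)) := by
  intro x
  refine (hBS.derivation x).map_mem_span_of_map_mem_span ?_
  rintro _ ⟨y, hy, rfl⟩
  rw [hBS.derivation_apply, includeRight_apply]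
  induction x using TensorProduct.induction_on with
  | zero => rw [hBS.map_zero_left]; exact zero_mem _
  | tmul a b =>
    have : (a * 1) ⊗ₜ[R] B b y = a ⊗ₜ[R] (1 : A) * includeRight (B b y) := by
      rw [includeRight_apply, tmul_mul_tmul, mul_one, one_mul]
    rw [hcompat, this]
    exact Ideal.mul_mem_left _ _ (Ideal.mem_map_of_mem _ (hI b y hy))
  | add x x' hx hx' => rw [hBS.1]; exact add_mem hx hx'

end BaseChange

theorem poissonRadicalACC_of_baseChange_general
    {k : Type*} [Field k] [CharZero k] {A : Type*} [CommRing A] [Algebra k A]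
    {L : Type*} [Field L] [Algebra k L]
    (B : A → A → A)
    (BL : (L ⊗[k] A) → (L ⊗[k] A) → (L ⊗[k] A)) (hBL : IsPoissonBracket L BL)
    (hcompat : ∀ (a c : L) (b d : A),
      BL (a ⊗ₜ[k] b) (c ⊗ₜ[k] d) = (a * c) ⊗ₜ[k] (B b d))
    (hACC : PoissonRadicalACC BL) :
    PoissonRadicalACC B := by
  have : CharZero L := charZero_of_injective_algebraMap (algebraMap k L).injective
  have hu (n : ℕ) (hn : n ≠ 0) : IsUnit (n : L ⊗[k] A) := by
    simpa using (Nat.cast_ne_zero.mpr hn : (n : L) ≠ 0).isUnit.map (algebraMap L (L ⊗[k] A))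
  intro c hPoisson hRadical hMono
  let inc : A →ₐ[k] L ⊗[k] A := includeRight
  obtain ⟨N, hN⟩ := hACC (fun n => ((c n).map inc).radical)
    (fun n => hBL.isPoissonIdeal_radical hu ((hPoisson n).map_includeRight hBL hcompat))
    (fun n => Ideal.radical_isRadical _)
    (fun m n hmn => Ideal.radical_mono (Ideal.map_mono (hMono hmn)))
  refine ⟨N, fun n hn => ?_⟩
  rw [← (hRadical n).comap_radical_map_includeRight (R := k) (S := L),
    ← (hRadical N).comap_radical_map_includeRight (R := k) (S := L)]
  exact congrArg (Ideal.comap inc) (hN n hn)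

/-- Let `k` be a field of characteristic zero, `A` a Poisson algebra over
`k`, and `L` a field extension of `k`.  Equip `L ⊗[k] A` with the canonical Poisson bracket
(an `L`-bilinear Poisson bracket satisfying `{a ⊗ b, c ⊗ d} = ac ⊗ {b, d}`).  If `L ⊗[k] A`
satisfies the ACC on radical Poisson ideals, then so does `A`. -/
theorem poissonRadicalACC_of_baseChange
    {k : Type*} [Field k] [CharZero k] {A : Type*} [CommRing A] [Algebra k A]
    {L : Type*} [Field L] [Algebra k L]
    (B : A → A → A) (hB : IsPoissonBracket k B)
    (BL : (L ⊗[k] A) → (L ⊗[k] A) → (L ⊗[k] A)) (hBL : IsPoissonBracket L BL)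
    (hcompat : ∀ (a c : L) (b d : A),
      BL (a ⊗ₜ[k] b) (c ⊗ₜ[k] d) = (a * c) ⊗ₜ[k] (B b d))
    (hACC : PoissonRadicalACC BL) :
    PoissonRadicalACC B :=
  poissonRadicalACC_of_baseChange_general B BL hBL hcompat hACC
end
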